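/- In the high-transfer-price setting with τ₁ > 0, the function P(t) := p̄ + ((t−τ₁)/((1−exp(−λ))·(1+z)·t·(1+1/γ)))^γ · (p^∨ − p̄) is twice differentiable on (τ₁,1], and its second derivative satisfies P''(t) = P'(t) · ((γ−1)·t − (γ+1)·(t−τ₁)) / (t·(t−τ₁)); in particular, since P'(t) > 0 and the multiplier ((γ−1)·t − (γ+1)·(t−τ₁))/(t·(t−τ₁)) < 0, the second derivative P''(t) is strictly negative, i.e. the slope of the variation of the optimal price with the tax rate is opposite to the profit-shifting direction. -/

import Mathlib

open Real Set Filter Topology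

/-!
Write `P t = p̄ + u(t)^γ (p^∨ - p̄)` with `u(t) = (t - τ₁)/(c t)`,
`c = (1 - e^{-λ})(1 + z)(1 + 1/γ) > 0`. Since `u'/u = τ₁/(t(t - τ₁))`,
`P'(t) = γ τ₁ (p^∨ - p̄) · u(t)^γ / (t(t - τ₁))`, and logarithmic differentiation of this
expression gives `P''/P' = (γ τ₁)/(t(t-τ₁)) - 1/t - 1/(t-τ₁)`, which is the stated multiplier.
Its numerator `(γ + 1)τ₁ - 2t` is negative because `γ ≤ 1` and `t > τ₁`.
-/

section SubDivConstMul

variable {a c γ s : ℝ}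

theorem hasDerivAt_sub_div_const_mul (hc : c ≠ 0) (hs : s ≠ 0) :
    HasDerivAt (fun x => (x - a) / (c * x)) (a / (c * s ^ 2)) s := by
  refine ((hasDerivAt_id' (x := s)).sub_const a).fun_div
    ((hasDerivAt_id' (x := s)).const_mul c) (mul_ne_zero hc hs) |>.congr_deriv ?_
  field_simp
  ring

theorem hasDerivAt_sub_div_const_mul_rpow (hc : c ≠ 0) (hs : s ≠ 0) (hsa : s ≠ a) :
    HasDerivAt (fun x => ((x - a) / (c * x)) ^ γ)
      (γ * a * (((s - a) / (c * s)) ^ γ / (s * (s - a)))) s := by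
  have hu : (s - a) / (c * s) ≠ 0 := div_ne_zero (sub_ne_zero.2 hsa) (mul_ne_zero hc hs)
  refine (hasDerivAt_sub_div_const_mul hc hs).rpow_const (p := γ) (Or.inl hu) |>.congr_deriv ?_
  rw [Real.rpow_sub_one hu]
  have : s - a ≠ 0 := sub_ne_zero.2 hsa
  field_simp

theorem hasDerivAt_sub_div_const_mul_rpow_div (hc : c ≠ 0) (hs : s ≠ 0) (hsa : s ≠ a) :
    HasDerivAt (fun x => ((x - a) / (c * x)) ^ γ / (x * (x - a)))
      (((s - a) / (c * s)) ^ γ / (s * (s - a)) *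
        (((γ - 1) * s - (γ + 1) * (s - a)) / (s * (s - a)))) s := by
  have hden : HasDerivAt (fun x => x * (x - a)) (1 * (s - a) + s * 1) s :=
    (hasDerivAt_id' (x := s)).fun_mul ((hasDerivAt_id' (x := s)).sub_const a)
  have : s - a ≠ 0 := sub_ne_zero.2 hsa
  refine (hasDerivAt_sub_div_const_mul_rpow hc hs hsa).fun_div hden (mul_ne_zero hs this)
    |>.congr_deriv ?_
  field_simp
  ring

theorem sub_mul_sub_div_mul_neg (ha : 0 < a) (has : a < s) (hγ : γ ≤ 1) :
    ((γ - 1) * s - (γ + 1) * (s - a)) / (s * (s - a)) < 0 :=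
  div_neg_of_neg_of_pos (by nlinarith) (mul_pos (ha.trans has) (sub_pos.2 has))

end SubDivConstMul

/-- In the high-transfer-price setting with `τ₁ > 0`, the optimal-transfer-price
function `P` is twice differentiable on `(τ₁,1]` with
`P''(t) = P'(t)·((γ−1)·t − (γ+1)·(t−τ₁))/(t·(t−τ₁))`; since `P'(t) > 0` and the
multiplier is negative, `P''(t) < 0`. -/
theorem stmt5 (τ₁ lam z γ pbar pvee : ℝ)
    (hτ₁ : τ₁ ∈ Set.Ioo (0 : ℝ) 1)
    (hlam : 0 < lam) (hz : 0 < z) (hγ : γ ∈ Set.Ioc (0 : ℝ) 1) (hp : pbar < pvee)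
    (P : ℝ → ℝ)
    (hP : P = fun t => pbar +
      ((t - τ₁) / ((1 - Real.exp (-lam)) * (1 + z) * t * (1 + 1 / γ))) ^ γ * (pvee - pbar)) :
    ∀ t ∈ Set.Ioc τ₁ 1,
      DifferentiableAt ℝ P t ∧
      DifferentiableAt ℝ (deriv P) t ∧
      deriv (deriv P) t =
        deriv P t * (((γ - 1) * t - (γ + 1) * (t - τ₁)) / (t * (t - τ₁))) ∧
      0 < deriv P t ∧
      ((γ - 1) * t - (γ + 1) * (t - τ₁)) / (t * (t - τ₁)) < 0 ∧
      deriv (deriv P) t < 0 := by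
  rintro t ⟨htτ, -⟩
  obtain ⟨hτ0, -⟩ := hτ₁
  obtain ⟨hγ0, hγ1⟩ := hγ
  set c := (1 - Real.exp (-lam)) * (1 + z) * (1 + 1 / γ)
  have hc : 0 < c := by
    have : 0 < 1 - Real.exp (-lam) := sub_pos.2 (Real.exp_lt_one_iff.2 (neg_neg_of_pos hlam))
    positivity
  set w := fun x => ((x - τ₁) / (c * x)) ^ γ / (x * (x - τ₁))
  set K := γ * τ₁ * (pvee - pbar)
  have hP' : ∀ s ∈ Ioi τ₁, HasDerivAt P (K * w s) s := fun s hs => by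
    have hPc : P = fun x => pbar + ((x - τ₁) / (c * x)) ^ γ * (pvee - pbar) := by
      rw [hP]; funext x; simp only [c]; ring_nf
    rw [hPc, mul_right_comm]
    exact ((hasDerivAt_sub_div_const_mul_rpow hc.ne' (hτ0.trans hs).ne' hs.ne').mul_const
      (pvee - pbar)).const_add pbar
  have hderiv : deriv P =ᶠ[𝓝 t] fun s => K * w s :=
    eventually_of_mem (isOpen_Ioi.mem_nhds htτ) fun s hs => (hP' s hs).deriv
  have hP'' : HasDerivAt (deriv P) (K * (w t *
      (((γ - 1) * t - (γ + 1) * (t - τ₁)) / (t * (t - τ₁))))) t :=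
    ((hasDerivAt_sub_div_const_mul_rpow_div hc.ne' (hτ0.trans htτ).ne' htτ.ne').const_mul
      K).congr_of_eventuallyEq hderiv
  have hP't : deriv P t = K * w t := (hP' t htτ).deriv
  have hP't_pos : 0 < deriv P t := by
    have : 0 < t - τ₁ := sub_pos.2 htτ
    have : 0 < t := hτ0.trans htτ
    have : 0 < pvee - pbar := sub_pos.2 hp
    rw [hP't]
    positivity
  have hmul_neg := sub_mul_sub_div_mul_neg hτ0 htτ hγ1
  have hP''t : deriv (deriv P) t =
      deriv P t * (((γ - 1) * t - (γ + 1) * (t - τ₁)) / (t * (t - τ₁))) := by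
    rw [hP''.deriv, hP't, ← mul_assoc]
  exact ⟨(hP' t htτ).differentiableAt, hP''.differentiableAt, hP''t, hP't_pos, hmul_neg,
    hP''t ▸ mul_neg_of_pos_of_neg hP't_pos hmul_neg⟩
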